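/- arXiv:2107.06371 — 8 statements merged into one kernel-verified Lean document; each statement's English description precedes it below -/
import Mathlib

section
/- Let n, k be positive integers with 2k ≤ n, and let F be an intersecting family of k-element subsets of {1,...,n}. Then |F| ≤ C(n-1, k-1). -/
theorem stmt_1 (n k : ℕ) (hk : 0 < k) (hkn : 2 * k ≤ n)
    (F : Finset (Finset (Fin n)))
    (hFk : ∀ S ∈ F, S.card = k)
    (hF : ∀ A ∈ F, ∀ B ∈ F, (A ∩ B).Nonempty) :
    F.card ≤ (n - 1).choose (k - 1) := by
  apply Finset.erdos_ko_rado
  · intro A hA B hB hd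
    exact absurd (hF A hA B hB) (by simpa [Finset.disjoint_iff_inter_eq_empty.mp hd] using Finset.not_nonempty_empty)
  · exact fun S hS => hFk S hS
  · omega
end

section
/- Let n, k be positive integers with 2k ≤ n, and consider the standard cyclic ordering of {0,1,...,n-1}. If F is an intersecting family of k-element subsets of Z_n each of which is a cyclic interval (a set of the form {a, a+1, ..., a+k-1} mod n), then |F| ≤ k. -/
/-!
Katona's cyclic argument. Fix a member `I(a₀)` of the family. Every interval `I(b)` meeting it
starts at `b = a₀ - k + p` with `p < 2k`, and the starts `p` and `p + k` give disjoint
intervals because `2k ≤ n`. Hence `p ↦ p % k` is injective on the starts of the family.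
-/

open Finset

def cyclicInterval (n k : ℕ) (a : ZMod n) : Finset (ZMod n) :=
  (range k).image (fun t : ℕ => a + (t : ZMod n))

lemma mem_cyclicInterval {n k : ℕ} {a x : ZMod n} :
    x ∈ cyclicInterval n k a ↔ ∃ t < k, a + (t : ZMod n) = x := by
  simp [cyclicInterval]

lemma ZMod.eq_of_natCast_eq_of_lt {n s t : ℕ} (hs : s < n) (ht : t < n)
    (h : (s : ZMod n) = t) : s = t := by
  rwa [ZMod.natCast_eq_natCast_iff', Nat.mod_eq_of_lt hs, Nat.mod_eq_of_lt ht] at h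

lemma disjoint_cyclicInterval_add {n k : ℕ} (hkn : 2 * k ≤ n) (a : ZMod n) :
    Disjoint (cyclicInterval n k a) (cyclicInterval n k (a + k)) := by
  refine disjoint_left.mpr fun x hx hx' => ?_
  obtain ⟨t, ht, rfl⟩ := mem_cyclicInterval.mp hx
  obtain ⟨s, hs, hst⟩ := mem_cyclicInterval.mp hx'
  have hcast : ((k + s : ℕ) : ZMod n) = t := by
    push_cast
    exact add_left_cancel (a := a) (by rw [← hst, add_assoc])
  have := ZMod.eq_of_natCast_eq_of_lt (by omega) (by omega) hcast
  omega

def cyclicOffset {n : ℕ} (k : ℕ) (a b : ZMod n) : ℕ :=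
  (b - a + k).val

lemma cyclicOffset_lt_of_inter_nonempty {n k : ℕ} (hkn : 2 * k ≤ n) {a b : ZMod n}
    (h : (cyclicInterval n k a ∩ cyclicInterval n k b).Nonempty) :
    cyclicOffset k a b < 2 * k := by
  obtain ⟨x, hx⟩ := h
  obtain ⟨t, ht, hxa⟩ := mem_cyclicInterval.mp (mem_inter.mp hx).1
  obtain ⟨s, hs, hxb⟩ := mem_cyclicInterval.mp (mem_inter.mp hx).2
  have hoffset : b - a + k = ((t + (k - s) : ℕ) : ZMod n) := by
    rw [Nat.cast_add, Nat.cast_sub hs.le]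
    linear_combination hxb - hxa
  rw [cyclicOffset, hoffset, ZMod.val_natCast_of_lt (by omega)]
  omega

lemma eq_add_of_cyclicOffset_eq_add {n : ℕ} [NeZero n] {k : ℕ} {a b c : ZMod n}
    (h : cyclicOffset k a b = cyclicOffset k a c + k) : b = c + k := by
  have := congrArg (Nat.cast : ℕ → ZMod n) h
  simp only [cyclicOffset, Nat.cast_add, ZMod.natCast_zmod_val] at this
  linear_combination this

lemma Nat.eq_or_eq_add_of_mod_eq {p q k : ℕ} (hp : p < 2 * k) (hq : q < 2 * k)
    (h : p % k = q % k) : p = q ∨ p = q + k ∨ q = p + k := by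
  have hp' := Nat.div_add_mod p k
  have hq' := Nat.div_add_mod q k
  have hpk : p / k < 2 := Nat.div_lt_of_lt_mul (by rwa [mul_comm])
  have hqk : q / k < 2 := Nat.div_lt_of_lt_mul (by rwa [mul_comm])
  interval_cases p / k <;> interval_cases q / k <;> omega

theorem card_le_of_pairwise_cyclicInterval_inter_nonempty {n k : ℕ} [NeZero n] (hk : 0 < k)
    (hkn : 2 * k ≤ n) (A : Finset (ZMod n))
    (hA : ∀ a ∈ A, ∀ b ∈ A, (cyclicInterval n k a ∩ cyclicInterval n k b).Nonempty) :
    A.card ≤ k := by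
  rcases A.eq_empty_or_nonempty with rfl | ⟨a₀, ha₀⟩
  · simp
  have hlt : ∀ b ∈ A, cyclicOffset k a₀ b < 2 * k :=
    fun b hb => cyclicOffset_lt_of_inter_nonempty hkn (hA a₀ ha₀ b hb)
  have hdisj : ∀ b ∈ A, ∀ c ∈ A, b ≠ c + k := by
    rintro b hb c hc rfl
    exact (hA c hc _ hb).not_disjoint (disjoint_cyclicInterval_add hkn c)
  calc A.card ≤ (range k).card := by
        refine card_le_card_of_injOn (fun b => cyclicOffset k a₀ b % k)
          (fun b _ => mem_range.mpr (Nat.mod_lt _ hk)) fun b hb c hc hbc => ?_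
        rcases Nat.eq_or_eq_add_of_mod_eq (hlt b hb) (hlt c hc) hbc with h | h | h
        · simpa [cyclicOffset] using ZMod.val_injective n h
        · exact absurd (eq_add_of_cyclicOffset_eq_add h) (hdisj b hb c hc)
        · exact absurd (eq_add_of_cyclicOffset_eq_add h) (hdisj c hc b hb)
    _ = k := card_range k

theorem stmt_2 (n k : ℕ) (hn : 0 < n) (hk : 0 < k) (hkn : 2 * k ≤ n)
    (F : Finset (Finset (ZMod n)))
    (hInt : ∀ S ∈ F, ∃ a : ZMod n, S = (Finset.range k).image (fun t : ℕ => a + (t : ZMod n)))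
    (hF : ∀ A ∈ F, ∀ B ∈ F, (A ∩ B).Nonempty) :
    F.card ≤ k := by
  classical
  have : NeZero n := ⟨hn.ne'⟩
  set A := univ.filter (fun a => cyclicInterval n k a ∈ F)
  have hFA : F ⊆ A.image (cyclicInterval n k) := by
    intro S hS
    obtain ⟨a, rfl⟩ := hInt S hS
    exact mem_image.mpr ⟨a, mem_filter.mpr ⟨mem_univ a, hS⟩, rfl⟩
  calc F.card ≤ (A.image (cyclicInterval n k)).card := card_le_card hFA
    _ ≤ A.card := card_image_le
    _ ≤ k := card_le_of_pairwise_cyclicInterval_inter_nonempty hk hkn A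
        fun a ha b hb => hF _ (mem_filter.mp ha).2 _ (mem_filter.mp hb).2
end

section
/- For 1 ≤ i < j ≤ n, if F is an intersecting family of subsets of [n], then C_ij(F) is also intersecting. -/
/-- The ij-compression of a single set. -/
def compressSet (i j : ℕ) (S : Finset ℕ) : Finset ℕ :=
  if j ∈ S ∧ i ∉ S then insert i (S.erase j) else S

/-- The ij-compression of a family: `{C_ij(S) : S ∈ F} ∪ {S ∈ F : C_ij(S) ∈ F}`. -/
def compressFamily (i j : ℕ) (F : Finset (Finset ℕ)) : Finset (Finset ℕ) :=
  F.image (compressSet i j) ∪ F.filter (fun S => compressSet i j S ∈ F)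

lemma compress_helper (i j : ℕ) (F : Finset (Finset ℕ))
    (hInt : ∀ A ∈ F, ∀ B ∈ F, (A ∩ B).Nonempty)
    (A : Finset ℕ) (hA : A ∈ F) (hCA : compressSet i j A ∈ F)
    (S : Finset ℕ) (hS : S ∈ F) (hjS : j ∈ S) (hiS : i ∉ S) :
    (A ∩ insert i (S.erase j)).Nonempty := by
  obtain ⟨x, hx⟩ := hInt A hA S hS
  rw [Finset.mem_inter] at hx
  by_cases hxj : x = j
  · by_cases hiA : i ∈ A
    · exact ⟨i, Finset.mem_inter.mpr ⟨hiA, Finset.mem_insert_self _ _⟩⟩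
    · have hCAeq : compressSet i j A = insert i (A.erase j) := by
        simp [compressSet, hxj ▸ hx.1, hiA]
      rw [hCAeq] at hCA
      obtain ⟨y, hy⟩ := hInt _ hCA S hS
      rw [Finset.mem_inter, Finset.mem_insert] at hy
      rcases hy.1 with rfl | hyA
      · exact absurd hy.2 hiS
      · refine ⟨y, Finset.mem_inter.mpr ⟨Finset.mem_of_mem_erase hyA,
          Finset.mem_insert_of_mem (Finset.mem_erase.mpr
            ⟨(Finset.mem_erase.mp hyA).1, hy.2⟩)⟩⟩
  · exact ⟨x, Finset.mem_inter.mpr ⟨hx.1,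
      Finset.mem_insert_of_mem (Finset.mem_erase.mpr ⟨hxj, hx.2⟩)⟩⟩

theorem stmt_5 (n i j : ℕ) (hi : 1 ≤ i) (hij : i < j) (hj : j ≤ n)
    (F : Finset (Finset ℕ)) (hF : ∀ S ∈ F, S ⊆ Finset.Icc 1 n)
    (hInt : ∀ A ∈ F, ∀ B ∈ F, (A ∩ B).Nonempty) :
    ∀ A ∈ compressFamily i j F, ∀ B ∈ compressFamily i j F, (A ∩ B).Nonempty := by
  have classify : ∀ X ∈ compressFamily i j F,
      (X ∈ F ∧ compressSet i j X ∈ F) ∨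
      (∃ S ∈ F, j ∈ S ∧ i ∉ S ∧ X = insert i (S.erase j)) := by
    intro X hX
    simp only [compressFamily, Finset.mem_union, Finset.mem_image,
      Finset.mem_filter] at hX
    rcases hX with ⟨S, hS, rfl⟩ | ⟨hX, hCX⟩
    · by_cases h : j ∈ S ∧ i ∉ S
      · exact Or.inr ⟨S, hS, h.1, h.2, by simp [compressSet, h]⟩
      · have heq : compressSet i j S = S := by simp [compressSet, h]
        rw [heq, heq]
        exact Or.inl ⟨hS, hS⟩
    · exact Or.inl ⟨hX, hCX⟩
  intro A hA B hB
  rcases classify A hA with ⟨hAF, hCA⟩ | ⟨S, hS, hjS, hiS, rfl⟩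
  · rcases classify B hB with ⟨hBF, hCB⟩ | ⟨T, hT, hjT, hiT, rfl⟩
    · exact hInt A hAF B hBF
    · exact compress_helper i j F hInt A hAF hCA T hT hjT hiT
  · rcases classify B hB with ⟨hBF, hCB⟩ | ⟨T, hT, hjT, hiT, rfl⟩
    · rw [Finset.inter_comm]
      exact compress_helper i j F hInt B hBF hCB S hS hjS hiS
    · exact ⟨i, Finset.mem_inter.mpr ⟨Finset.mem_insert_self _ _,
        Finset.mem_insert_self _ _⟩⟩
end

section
/- If F is a left-compressed t-intersecting family of subsets of [n], then the family B = {S ∈ F : 1 ∉ S}, viewed as a family of subsets of {2,...,n}, is (t+1)-intersecting. -/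
theorem stmt_7 (n t : ℕ) (ht : 1 ≤ t) (F : Finset (Finset ℕ))
    (hF : ∀ S ∈ F, S ⊆ Finset.Icc 1 n)
    (hcomp : ∀ i j : ℕ, 1 ≤ i → i < j → j ≤ n → compressFamily i j F = F)
    (hInt : ∀ A ∈ F, ∀ B ∈ F, t ≤ (A ∩ B).card) :
    ∀ A ∈ F.filter (fun S => 1 ∉ S), ∀ B ∈ F.filter (fun S => 1 ∉ S),
      t + 1 ≤ (A ∩ B).card := by
  intro A hA B hB
  simp only [Finset.mem_filter] at hA hB
  obtain ⟨hAF, hA1⟩ := hA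
  obtain ⟨hBF, hB1⟩ := hB
  by_contra h
  push_neg at h
  have hcard : (A ∩ B).card = t := le_antisymm (by omega) (hInt A hAF B hBF)
  have hne : (A ∩ B).Nonempty := Finset.card_pos.mp (by omega)
  obtain ⟨j, hj⟩ := hne
  have hjA : j ∈ A := (Finset.mem_inter.mp hj).1
  have hjB : j ∈ B := (Finset.mem_inter.mp hj).2
  have hjIcc := Finset.mem_Icc.mp (hF A hAF hjA)
  have hjne : j ≠ 1 := fun e => hA1 (e ▸ hjA)
  have hj1 : 1 < j := by omega
  have hA' : compressSet 1 j A ∈ F := by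
    have := Finset.mem_union_left (F.filter (fun S => compressSet 1 j S ∈ F))
      (Finset.mem_image_of_mem (compressSet 1 j) hAF)
    rw [← hcomp 1 j le_rfl hj1 hjIcc.2, compressFamily]
    exact this
  have hcs : compressSet 1 j A = insert 1 (A.erase j) := by
    simp [compressSet, hjA, hA1]
  rw [hcs] at hA'
  have hint := hInt _ hA' B hBF
  have heq : insert 1 (A.erase j) ∩ B = (A ∩ B).erase j := by
    ext x
    simp only [Finset.mem_inter, Finset.mem_erase, Finset.mem_insert]
    constructor
    · rintro ⟨h1 | ⟨hx, hxA⟩, hxB⟩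
      · exact absurd (h1 ▸ hxB) hB1
      · exact ⟨hx, hxA, hxB⟩
    · rintro ⟨hx, hxA, hxB⟩; exact ⟨Or.inr ⟨hx, hxA⟩, hxB⟩
  rw [heq] at hint
  have := Finset.card_erase_of_mem hj
  omega
end

section
/- Let F be a family of subsets of [n] such that |S| is odd for every S ∈ F, and |S ∩ T| is even for all distinct S, T ∈ F. Then |F| ≤ n. -/
theorem stmt_8 (n : ℕ) (F : Finset (Finset (Fin n)))
    (hodd : ∀ S ∈ F, Odd S.card)
    (heven : ∀ S ∈ F, ∀ T ∈ F, S ≠ T → Even (S ∩ T).card) :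
    F.card ≤ n := by
  classical
  set v : Finset (Fin n) → (Fin n → ZMod 2) :=
    fun S i => if i ∈ S then 1 else 0 with hv
  have hdot : ∀ S T : Finset (Fin n),
      ∑ i, v S i * v T i = ((S ∩ T).card : ZMod 2) := by
    intro S T
    have : ∀ i : Fin n, v S i * v T i = if i ∈ S ∩ T then (1 : ZMod 2) else 0 := by
      intro i
      simp only [hv, Finset.mem_inter]
      by_cases h1 : i ∈ S <;> by_cases h2 : i ∈ T <;> simp [h1, h2]
    rw [Finset.sum_congr rfl fun i _ => this i, Finset.sum_ite_mem,
      Finset.univ_inter, Finset.sum_const, Finset.card_eq_sum_ones (S ∩ T)]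
    simp
  have hli : LinearIndependent (ZMod 2) (fun S : F => v S.1) := by
    rw [Fintype.linearIndependent_iff]
    intro c hc T
    have hT := congrArg (fun w : Fin n → ZMod 2 => ∑ i, w i * v T.1 i) hc
    simp only [Finset.sum_apply, Pi.smul_apply, smul_eq_mul, Finset.sum_mul,
      Pi.zero_apply, zero_mul, Finset.sum_const_zero] at hT
    rw [Finset.sum_comm] at hT
    simp only [mul_assoc, ← Finset.mul_sum] at hT
    rw [Finset.sum_congr rfl (fun j _ => by rw [hdot j.1 T.1])] at hT
    rw [Finset.sum_eq_single T] at hT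
    · have hself : (((T.1 ∩ T.1).card : ℕ) : ZMod 2) = 1 := by
        rw [Finset.inter_self]
        obtain ⟨k, hk⟩ := hodd T.1 T.2
        rw [hk]; push_cast; rw [show (2:ZMod 2) = 0 by decide]; ring
      rw [hself, mul_one] at hT
      exact hT
    · intro j _ hjT
      have hne : j.1 ≠ T.1 := fun h => hjT (Subtype.ext h)
      have := heven j.1 j.2 T.1 T.2 hne
      obtain ⟨k, hk⟩ := this
      rw [hk]
      have : ((k + k : ℕ) : ZMod 2) = 0 := by push_cast; rw [← two_mul, show (2:ZMod 2) = 0 by decide, zero_mul]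
      rw [this, mul_zero]
    · intro h; exact absurd (Finset.mem_univ T) h
  have := LinearIndependent.fintype_card_le_finrank hli
  simpa using this.trans_eq (by simp)
end

section
/- Let 0 < β < 1 and let F, G be families of subsets of [n] such that |F ∩ G| > βn for all F ∈ F and G ∈ G. Then |F| · |G| ≤ 2^{2n·H((1+β)/2)}, where H is the binary entropy function H(p) = p·log₂(1/p) + (1-p)·log₂(1/(1-p)). -/
/-- The binary entropy function. -/
noncomputable def binEnt (x : ℝ) : ℝ :=
  x * Real.logb 2 (1 / x) + (1 - x) * Real.logb 2 (1 / (1 - x))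

/-!
Shifting (the UV-compressions `𝓒 {y} {x}` with `y < x`) preserves the sizes of `F` and `G` and
their cross `t`-intersection, `t = ⌊βn⌋ + 1`, so we may assume `F` shifted. Read `A ⊆ [n]` as the
±1 walk that steps up at the elements of `A`. If `F` is shifted, then for all `A ∈ F`, `B ∈ G` the
two walks together reach height `2t` at some time: otherwise moving the largest common element
of `A` and `B` down into a gap would stay in `F` and, by induction, contradict this. So if `s` is
the least maximal height of a walk of `F`, every walk of `F` reaches `s` and every walk of `G`
reaches `2t - s`. The exponential-martingale bound `(y + y⁻¹)ⁿ y⁻ˢ` (any `y ≥ 1`) on the number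
of walks reaching `s` gives `|F| |G| ≤ (y + y⁻¹)²ⁿ y^(-2βn)`, which is `2^(2n H((1+β)/2))` for
`y = √((1+β)/(1-β))`.
-/

namespace FranklRodl
open Finset
open scoped FinsetFamily

section Compression

variable {α : Type*} [DecidableEq α]

lemma compress_singleton_singleton (x y : α) (A : Finset α) :
    UV.compress {y} {x} A = if x ∈ A ∧ y ∉ A then insert y (A.erase x) else A := by
  unfold UV.compress
  simp only [disjoint_singleton_left, singleton_subset_iff, and_comm]
  split_ifs with h
  · ext v
    simp only [sup_eq_union, mem_sdiff, mem_union, mem_singleton, mem_insert, mem_erase]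
    grind
  · rfl

lemma card_insert_erase_inter {x y : α} {A : Finset α} (B : Finset α) (hx : x ∈ A) (hy : y ∉ A) :
    #(insert y (A.erase x) ∩ B) + (if x ∈ B then 1 else 0) =
      #(A ∩ B) + (if y ∈ B then 1 else 0) := by
  have hyx : y ≠ x := by rintro rfl; exact hy hx
  by_cases hyB : y ∈ B <;> by_cases hxB : x ∈ B <;>
    simp only [hyB, hxB, insert_inter_of_mem, insert_inter_of_notMem, erase_inter, if_true,
      if_false, add_zero, not_false_eq_true]
  · rw [card_insert_of_notMem (by simp [hy]), card_erase_of_mem (by simp [hx, hxB])]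
    have := card_pos.2 ⟨x, mem_inter.2 ⟨hx, hxB⟩⟩
    omega
  · rw [card_insert_of_notMem (by simp [hy]), erase_eq_of_notMem (by simp [hxB])]
  · rw [card_erase_of_mem (by simp [hx, hxB])]
    have := card_pos.2 ⟨x, mem_inter.2 ⟨hx, hxB⟩⟩
    omega
  · rw [erase_eq_of_notMem (by simp [hxB])]

lemma card_inter_le_card_compress_inter_compress (x y : α) (A B : Finset α) :
    #(A ∩ B) ≤ #(UV.compress {y} {x} A ∩ UV.compress {y} {x} B) := by
  rw [compress_singleton_singleton, compress_singleton_singleton]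
  by_cases hA : x ∈ A ∧ y ∉ A <;> by_cases hB : x ∈ B ∧ y ∉ B
  · rw [if_pos hA, if_pos hB]
    have hxy : x ≠ y := fun h => hA.2 (h ▸ hA.1)
    have h1 := card_insert_erase_inter (insert y (B.erase x)) hA.1 hA.2
    have h2 := card_insert_erase_inter A hB.1 hB.2
    simp only [inter_comm _ A] at h2
    rw [if_neg (by simp [hxy]), if_pos (mem_insert_self _ _)] at h1
    rw [if_pos hA.1, if_neg hA.2] at h2
    omega
  · rw [if_pos hA, if_neg hB]
    have := card_insert_erase_inter B hA.1 hA.2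
    split_ifs at this <;> grind
  · rw [if_neg hA, if_pos hB]
    have := card_insert_erase_inter A hB.1 hB.2
    simp only [inter_comm _ A] at this
    split_ifs at this <;> grind
  · rw [if_neg hA, if_neg hB]

lemma min_card_inter_le_card_compress_inter (x y : α) (A B : Finset α) :
    min #(A ∩ B) #(A ∩ UV.compress {y} {x} B) ≤ #(UV.compress {y} {x} A ∩ B) := by
  rw [compress_singleton_singleton, compress_singleton_singleton]
  by_cases hA : x ∈ A ∧ y ∉ A
  · rw [if_pos hA]
    have h1 := card_insert_erase_inter B hA.1 hA.2
    by_cases hB : x ∈ B ∧ y ∉ B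
    · rw [if_pos hB]
      have h2 := card_insert_erase_inter A hB.1 hB.2
      simp only [inter_comm _ A] at h2
      simp only [hA.1, hA.2, hB.1, hB.2, if_true, if_false] at h1 h2
      omega
    · rw [if_neg hB]
      split_ifs at h1 <;> grind
  · rw [if_neg hA]
    exact min_le_left _ _

def CrossIntersecting (t : ℕ) (F G : Finset (Finset α)) : Prop :=
  ∀ A ∈ F, ∀ B ∈ G, t ≤ #(A ∩ B)

lemma CrossIntersecting.compression {t : ℕ} {F G : Finset (Finset α)}
    (h : CrossIntersecting t F G) (x y : α) :
    CrossIntersecting t (𝓒 {y} {x} F) (𝓒 {y} {x} G) := by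
  intro A' hA' B' hB'
  rw [UV.mem_compression] at hA' hB'
  obtain ⟨hA, hcA⟩ | ⟨-, A, hA, rfl⟩ := hA' <;> obtain ⟨hB, hcB⟩ | ⟨-, B, hB, rfl⟩ := hB'
  · exact h _ hA _ hB
  · have := min_card_inter_le_card_compress_inter x y B A'
    rw [inter_comm B, inter_comm B, inter_comm (UV.compress _ _ B)] at this
    exact (le_min (h _ hA _ hB) (h _ hcA _ hB)).trans this
  · exact (le_min (h _ hA _ hB) (h _ hA _ hcB)).trans
      (min_card_inter_le_card_compress_inter x y A B')
  · exact (h _ hA _ hB).trans (card_inter_le_card_compress_inter_compress x y A B)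

end Compression

lemma sum_compression_lt {α β : Type*} [GeneralizedBooleanAlgebra α]
    [DecidableRel (@Disjoint α _ _)] [DecidableLE α] [DecidableEq α]
    [AddCommMonoid β] [PartialOrder β] [IsOrderedCancelAddMonoid β]
    {u v : α} {s : Finset α} {w : α → β}
    (hw : ∀ a ∈ s, UV.compress u v a ≠ a → w (UV.compress u v a) < w a) (hs : 𝓒 u v s ≠ s) :
    ∑ a ∈ 𝓒 u v s, w a < ∑ a ∈ s, w a := by
  rw [UV.compression, sum_union UV.compress_disjoint, filter_image,
    sum_image UV.compress_injOn, ← sum_filter_add_sum_filter_not s (UV.compress u v · ∈ s)]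
  refine (add_lt_add_iff_left _).2 (sum_lt_sum_of_nonempty ?_ fun a ha => ?_)
  · by_contra hempty
    rw [not_nonempty_iff_eq_empty] at hempty
    apply hs
    rw [UV.compression, filter_image, hempty, image_empty, union_empty]
    exact filter_true_of_mem fun a ha => by_contra fun hca =>
      (eq_empty_iff_forall_notMem.1 hempty) a (mem_filter.2 ⟨ha, hca⟩)
  · rw [mem_filter] at ha
    exact hw a ha.1 fun hca => ha.2 (by rw [hca]; exact ha.1)

variable {n : ℕ}

def weight (A : Finset (Fin n)) : ℕ := ∑ v ∈ A, (v : ℕ)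

lemma weight_insert_erase_lt {A : Finset (Fin n)} {x y : Fin n} (hx : x ∈ A) (hy : y ∉ A)
    (hyx : y < x) : weight (insert y (A.erase x)) < weight A := by
  have := sum_erase_add A (fun v : Fin n => (v : ℕ)) hx
  rw [weight, sum_insert fun h => hy (mem_of_mem_erase h)]
  rw [weight, ← this]
  have : (y : ℕ) < x := hyx
  omega

lemma sum_weight_compression_lt {x y : Fin n} (hyx : y < x) {F : Finset (Finset (Fin n))}
    (hF : 𝓒 {y} {x} F ≠ F) : ∑ A ∈ 𝓒 {y} {x} F, weight A < ∑ A ∈ F, weight A := by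
  refine sum_compression_lt (fun A _ hA => ?_) hF
  rw [compress_singleton_singleton] at hA ⊢
  split_ifs at hA ⊢ with h
  · exact weight_insert_erase_lt h.1 h.2 hyx
  · exact absurd rfl hA

lemma sum_weight_compression_le {x y : Fin n} (hyx : y < x) (F : Finset (Finset (Fin n))) :
    ∑ A ∈ 𝓒 {y} {x} F, weight A ≤ ∑ A ∈ F, weight A := by
  obtain h | h := eq_or_ne (𝓒 {y} {x} F) F
  · rw [h]
  · exact (sum_weight_compression_lt hyx h).le

def IsShifted (F : Finset (Finset (Fin n))) : Prop :=
  ∀ ⦃x y : Fin n⦄, y < x → UV.IsCompressed {y} {x} F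

lemma IsShifted.insert_erase_mem {F : Finset (Finset (Fin n))} (hF : IsShifted F)
    {A : Finset (Fin n)} {x y : Fin n} (hA : A ∈ F) (hx : x ∈ A) (hy : y ∉ A) (hyx : y < x) :
    insert y (A.erase x) ∈ F := by
  have := UV.compress_mem_compression (u := {y}) (v := {x}) hA
  rwa [(hF hyx).eq, compress_singleton_singleton, if_pos ⟨hx, hy⟩] at this

theorem exists_isShifted_crossIntersecting {t : ℕ} {F G : Finset (Finset (Fin n))}
    (h : CrossIntersecting t F G) :
    ∃ F' G' : Finset (Finset (Fin n)), IsShifted F' ∧ IsShifted G' ∧ #F' = #F ∧ #G' = #G ∧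
      CrossIntersecting t F' G' := by
  classical
  let potential : Finset (Finset (Fin n)) × Finset (Finset (Fin n)) → ℕ :=
    fun p => ∑ A ∈ p.1, weight A + ∑ B ∈ p.2, weight B
  obtain ⟨⟨F', G'⟩, hmem, hmin⟩ :=
    ({p | #p.1 = #F ∧ #p.2 = #G ∧ CrossIntersecting t p.1 p.2} : Finset (_ × _)).exists_min_image
      potential ⟨(F, G), by simp [h]⟩
  simp only [mem_filter, mem_univ, true_and] at hmem
  obtain ⟨hF, hG, hFG⟩ := hmem
  suffices hfix : ∀ ⦃x y : Fin n⦄, y < x → 𝓒 {y} {x} F' = F' ∧ 𝓒 {y} {x} G' = G' from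
    ⟨F', G', fun x y hyx => (hfix hyx).1, fun x y hyx => (hfix hyx).2, hF, hG, hFG⟩
  intro x y hyx
  by_contra hne
  have hle := hmin (𝓒 {y} {x} F', 𝓒 {y} {x} G') (by simp [hF, hG, hFG.compression x y])
  have hF' := sum_weight_compression_le hyx F'
  have hG' := sum_weight_compression_le hyx G'
  simp only [potential] at hle
  rcases not_and_or.1 hne with hne | hne
  · have := sum_weight_compression_lt hyx hne
    omega
  · have := sum_weight_compression_lt hyx hne
    omega

def walk (A : Finset (Fin n)) (m : ℕ) : ℤ := ∑ v : Fin n with v.val < m, if v ∈ A then 1 else -1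

@[simp] lemma walk_zero (A : Finset (Fin n)) : walk A 0 = 0 := by simp [walk]

lemma walk_add_walk_eq {A B : Finset (Fin n)} {m m' : ℕ} (hm : m ≤ m')
    (hgap : ∀ v : Fin n, m ≤ v → v < m' → v ∈ A ∪ B) :
    walk A m' + walk B m' = walk A m + walk B m + 2 * #{v ∈ A ∩ B | m ≤ v.val ∧ v.val < m'} := by
  simp only [walk, sum_filter, natCast_card_filter, mul_sum, ← sum_add_distrib]
  rw [← univ_inter (A ∩ B), ← sum_ite_mem, ← sum_add_distrib]
  refine sum_congr rfl fun v _ => ?_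
  have := hgap v
  split_ifs <;> simp_all <;> omega

lemma walk_insert_erase {A : Finset (Fin n)} {x y : Fin n} (hx : x ∈ A) (hy : y ∉ A) (m : ℕ) :
    walk (insert y (A.erase x)) m =
      walk A m - 2 * (if x < m then 1 else 0) + 2 * (if y < m then 1 else 0) := by
  have hyx : y ≠ x := fun h => hy (h ▸ hx)
  simp only [walk, sum_filter]
  have hterm : ∀ v : Fin n, (if v.val < m then if v ∈ insert y (A.erase x) then 1 else -1 else 0) =
      (if v.val < m then if v ∈ A then 1 else -1 else 0) -
        2 * (if v = x then if x.val < m then 1 else 0 else 0) +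
        2 * (if v = y then if y.val < m then 1 else 0 else 0) := by
    intro v
    by_cases hvx : v = x <;> by_cases hvy : v = y <;> simp_all <;> split_ifs <;> simp_all
  simp only [hterm, sum_add_distrib, sum_sub_distrib, ← mul_sum, sum_ite_eq', mem_univ, if_true]

theorem IsShifted.exists_two_mul_le_walk_add_walk {F : Finset (Finset (Fin n))}
    (hF : IsShifted F) {B : Finset (Fin n)} {t : ℕ} (ht : 0 < t) (hB : ∀ A ∈ F, t ≤ #(A ∩ B))
    {A : Finset (Fin n)} (hA : A ∈ F) : ∃ m ≤ n, 2 * (t : ℤ) ≤ walk A m + walk B m := by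
  induction hw : weight A using Nat.strong_induction_on generalizing A with
  | _ w ih =>
  obtain ⟨x, hxAB, hxmax⟩ := (A ∩ B).exists_max_image id (card_pos.1 (ht.trans_le (hB A hA)))
  have hxA := (mem_inter.1 hxAB).1
  by_cases hgap : ∃ y < x, y ∉ A ∪ B
  · obtain ⟨y, hyY, hymax⟩ :=
      ({y | y < x ∧ y ∉ A ∪ B} : Finset (Fin n)).exists_max_image id
        (by simpa [Finset.Nonempty] using hgap)
    simp only [mem_filter, mem_univ, true_and, mem_union, not_or] at hyY
    obtain ⟨hyx, hyA, hyB⟩ := hyY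
    obtain ⟨m₁, hm₁n, hm₁⟩ := ih _ (hw ▸ weight_insert_erase_lt hxA hyA hyx)
      (hF.insert_erase_mem hA hxA hyA hyx) rfl
    rw [walk_insert_erase hxA hyA] at hm₁
    have hyx' : y.val < x.val := hyx
    by_cases hm₁x : y.val < m₁ ∧ m₁ ≤ x.val
    -- No gap lies in `[m₁, x]`, so from `m₁` to `x + 1` the two walks together climb by at least 2.
    · refine ⟨x + 1, x.isLt, ?_⟩
      have hclimb := walk_add_walk_eq (A := A) (B := B) (m := m₁) (m' := x.val + 1) (by omega)
        fun v hv hvx => by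
          by_contra hvAB
          have hvx : v < x := by
            refine lt_of_le_of_ne (Nat.lt_succ_iff.1 hvx) ?_
            rintro rfl
            exact hvAB (mem_union_left _ hxA)
          have := hymax v (mem_filter.2 ⟨mem_univ _, hvx, hvAB⟩)
          simp only [id, Fin.le_def] at this
          omega
      have hx : 0 < #{v ∈ A ∩ B | m₁ ≤ v.val ∧ v.val < x.val + 1} :=
        card_pos.2 ⟨x, mem_filter.2 ⟨hxAB, hm₁x.2, Nat.lt_succ_self _⟩⟩
      rw [if_neg (by omega), if_pos hm₁x.1] at hm₁
      omega
    · refine ⟨m₁, hm₁n, ?_⟩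
      split_ifs at hm₁ <;> omega
  · push Not at hgap
    refine ⟨x + 1, x.isLt, ?_⟩
    have hclimb := walk_add_walk_eq (A := A) (B := B) (m := 0) (m' := x.val + 1) (Nat.zero_le _)
      fun v _ hvx => by
        rcases (Nat.lt_succ_iff.1 hvx).lt_or_eq with hvx | hvx
        · exact hgap v hvx
        · exact Fin.ext hvx ▸ mem_union_left _ hxA
    rw [filter_true_of_mem fun v hv => ⟨Nat.zero_le _, Nat.lt_succ_of_le (hxmax v hv)⟩] at hclimb
    have := hB A hA
    simp only [walk_zero] at hclimb
    omega

noncomputable def tail (A : Finset (Fin (n + 1))) : Finset (Fin n) :=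
  A.preimage Fin.succ (Fin.succ_injective n).injOn

lemma walk_succ_eq_add_walk_tail (A : Finset (Fin (n + 1))) (m : ℕ) :
    walk A (m + 1) = (if 0 ∈ A then 1 else -1) + walk (tail A) m := by
  simp [walk, sum_filter, Fin.sum_univ_succ, tail]

lemma eq_of_tail_eq {A B : Finset (Fin (n + 1))} (h0 : 0 ∈ A ↔ 0 ∈ B) (h : tail A = tail B) :
    A = B := by
  ext v
  cases v using Fin.cases with
  | zero => exact h0
  | succ i => simpa [tail] using congrArg (i ∈ ·) h

lemma exists_le_walk_tail {A : Finset (Fin (n + 1))} {s : ℤ} (hs : 0 < s)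
    (h : ∃ m ≤ n + 1, s ≤ walk A m) : ∃ m ≤ n, s - (if 0 ∈ A then 1 else -1) ≤ walk (tail A) m := by
  obtain ⟨_ | m, hm, hwalk⟩ := h
  · rw [walk_zero] at hwalk
    omega
  · exact ⟨m, by omega, by rw [walk_succ_eq_add_walk_tail] at hwalk; omega⟩

lemma two_pow_le_add_inv_pow_mul_zpow {y : ℝ} (hy : 1 ≤ y) {s : ℤ} (hs : s ≤ 0) (n : ℕ) :
    (2 : ℝ) ^ n ≤ (y + y⁻¹) ^ n * y ^ (-s) := by
  have h2 : 2 ≤ y + y⁻¹ := by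
    have : y * y⁻¹ = 1 := mul_inv_cancel₀ (by positivity)
    nlinarith [inv_pos.2 (zero_lt_one.trans_le hy)]
  calc (2 : ℝ) ^ n ≤ (y + y⁻¹) ^ n := by gcongr
    _ ≤ (y + y⁻¹) ^ n * y ^ (-s) :=
      le_mul_of_one_le_right (by positivity) (one_le_zpow₀ hy (by omega))

lemma card_le_add_inv_pow_mul_zpow_of_nonpos {y : ℝ} (hy : 1 ≤ y) {s : ℤ} (hs : s ≤ 0)
    (H : Finset (Finset (Fin n))) : (#H : ℝ) ≤ (y + y⁻¹) ^ n * y ^ (-s) := by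
  refine le_trans ?_ (two_pow_le_add_inv_pow_mul_zpow hy hs n)
  exact_mod_cast (card_le_univ H).trans_eq (by simp)

theorem card_le_add_inv_pow_mul_zpow {y : ℝ} (hy : 1 ≤ y) {s : ℤ} {H : Finset (Finset (Fin n))}
    (hH : ∀ A ∈ H, ∃ m ≤ n, s ≤ walk A m) : (#H : ℝ) ≤ (y + y⁻¹) ^ n * y ^ (-s) := by
  induction n generalizing s with
  | zero =>
    obtain hs | hs := le_or_gt s 0
    · exact card_le_add_inv_pow_mul_zpow_of_nonpos hy hs H
    have : H = ∅ := eq_empty_of_forall_notMem fun A hA => by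
      obtain ⟨m, hm, h⟩ := hH A hA
      rw [Nat.le_zero.1 hm, walk_zero] at h
      omega
    simp only [this, card_empty, Nat.cast_zero]
    positivity
  | succ n ih =>
    obtain hs | hs := le_or_gt s 0
    · exact card_le_add_inv_pow_mul_zpow_of_nonpos hy hs H
    have hy0 : 0 < y := zero_lt_one.trans_le hy
    have hin : (#{A ∈ H | 0 ∈ A} : ℝ) ≤ (y + y⁻¹) ^ n * y ^ (-(s - 1)) := by
      rw [← card_image_of_injOn fun A hA B hB h => eq_of_tail_eq (by simp_all) h]
      refine ih fun A' hA' => ?_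
      obtain ⟨A, hA, rfl⟩ := mem_image.1 hA'
      rw [mem_filter] at hA
      simpa [hA.2] using exists_le_walk_tail hs (hH A hA.1)
    have hout : (#{A ∈ H | 0 ∉ A} : ℝ) ≤ (y + y⁻¹) ^ n * y ^ (-(s + 1)) := by
      rw [← card_image_of_injOn fun A hA B hB h => eq_of_tail_eq (by simp_all) h]
      refine ih fun A' hA' => ?_
      obtain ⟨A, hA, rfl⟩ := mem_image.1 hA'
      rw [mem_filter] at hA
      simpa [hA.2] using exists_le_walk_tail hs (hH A hA.1)
    rw [← card_filter_add_card_filter_not (0 ∈ ·), Nat.cast_add]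
    calc _ ≤ (y + y⁻¹) ^ n * y ^ (-(s - 1)) + (y + y⁻¹) ^ n * y ^ (-(s + 1)) := add_le_add hin hout
      _ = (y + y⁻¹) ^ (n + 1) * y ^ (-s) := by
        rw [show -(s - 1) = -s + 1 by ring, show -(s + 1) = -s - 1 by ring,
          zpow_add_one₀ hy0.ne', zpow_sub_one₀ hy0.ne']
        ring

theorem IsShifted.card_mul_card_le {F G : Finset (Finset (Fin n))} (hF : IsShifted F) {t : ℕ}
    (ht : 0 < t) (hFG : CrossIntersecting t F G) {y : ℝ} (hy : 1 ≤ y) :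
    (#F : ℝ) * #G ≤ (y + y⁻¹) ^ (2 * n) * y ^ (-(2 * t : ℤ)) := by
  obtain rfl | hFne := F.eq_empty_or_nonempty
  · simp only [card_empty, Nat.cast_zero, zero_mul]
    positivity
  let maxWalk (A : Finset (Fin n)) : ℤ := (range (n + 1)).sup' nonempty_range_add_one (walk A)
  obtain ⟨A₀, hA₀, hmin⟩ := F.exists_min_image maxWalk hFne
  have hF' : ∀ A ∈ F, ∃ m ≤ n, maxWalk A₀ ≤ walk A m := fun A hA => by
    obtain ⟨m, hm, h⟩ := (le_sup'_iff _).1 (hmin A hA)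
    exact ⟨m, Nat.lt_succ_iff.1 (mem_range.1 hm), h⟩
  have hG : ∀ B ∈ G, ∃ m ≤ n, 2 * t - maxWalk A₀ ≤ walk B m := fun B hB => by
    obtain ⟨m, hm, h⟩ := hF.exists_two_mul_le_walk_add_walk ht (fun A hA => hFG A hA B hB) hA₀
    have : walk A₀ m ≤ maxWalk A₀ := le_sup' (walk A₀) (mem_range.2 (Nat.lt_succ_of_le hm))
    exact ⟨m, hm, by omega⟩
  have hy0 : y ≠ 0 := (zero_lt_one.trans_le hy).ne'
  calc (#F : ℝ) * #G ≤ ((y + y⁻¹) ^ n * y ^ (-maxWalk A₀)) *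
        ((y + y⁻¹) ^ n * y ^ (-(2 * t - maxWalk A₀))) :=
      mul_le_mul (card_le_add_inv_pow_mul_zpow hy hF') (card_le_add_inv_pow_mul_zpow hy hG)
        (by positivity) (by positivity)
    _ = (y + y⁻¹) ^ (2 * n) * y ^ (-(2 * t : ℤ)) := by
      rw [mul_mul_mul_comm, ← pow_add, ← zpow_add₀ hy0, two_mul n]
      ring_nf

lemma exists_add_inv_mul_rpow_eq_two_rpow_binEnt {β : ℝ} (hβ0 : 0 ≤ β) (hβ1 : β < 1) :
    ∃ y : ℝ, 1 ≤ y ∧ (y + y⁻¹) * y ^ (-β) = 2 ^ binEnt ((1 + β) / 2) := by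
  set p := (1 + β) / 2
  have hq : 1 - p = (1 - β) / 2 := by ring
  have hp0 : 0 < p := by positivity
  have hq0 : 0 < 1 - p := by linarith
  set a := Real.log p
  set b := Real.log (1 - p)
  refine ⟨Real.exp ((a - b) / 2),
    Real.one_le_exp (by linarith [Real.log_le_log hq0 (by linarith)]), ?_⟩
  have hsum : Real.exp ((a - b) / 2) + (Real.exp ((a - b) / 2))⁻¹ = Real.exp (-(a + b) / 2) := by
    calc Real.exp ((a - b) / 2) + (Real.exp ((a - b) / 2))⁻¹
        = Real.exp a * Real.exp (-(a + b) / 2) + Real.exp b * Real.exp (-(a + b) / 2) := by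
          rw [← Real.exp_neg, ← Real.exp_add, ← Real.exp_add]
          ring_nf
      _ = Real.exp (-(a + b) / 2) := by
          rw [Real.exp_log hp0, Real.exp_log hq0, ← add_mul, add_sub_cancel, one_mul]
  rw [hsum, ← Real.exp_mul, ← Real.exp_add, Real.rpow_def_of_pos two_pos, binEnt]
  congr 1
  simp only [Real.logb, one_div, Real.log_inv]
  field_simp
  ring

end FranklRodl

theorem stmt_11 (n : ℕ) (β : ℝ) (hβ0 : 0 < β) (hβ1 : β < 1)
    (F G : Finset (Finset (Fin n)))
    (h : ∀ A ∈ F, ∀ B ∈ G, β * n < ((A ∩ B).card : ℝ)) :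
    (F.card : ℝ) * (G.card : ℝ) ≤ (2 : ℝ) ^ (2 * (n : ℝ) * binEnt ((1 + β) / 2)) := by
  set t := ⌊β * n⌋₊ + 1
  have hβt : β * n < t := by push_cast [t]; exact Nat.lt_floor_add_one _
  have hFG : FranklRodl.CrossIntersecting t F G := fun A hA B hB =>
    (Nat.floor_lt (by positivity)).2 (h A hA B hB)
  obtain ⟨F', G', hF', -, hcF, hcG, hFG'⟩ := FranklRodl.exists_isShifted_crossIntersecting hFG
  obtain ⟨y, hy, hyβ⟩ := FranklRodl.exists_add_inv_mul_rpow_eq_two_rpow_binEnt hβ0.le hβ1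
  have hy0 : 0 ≤ y := zero_le_one.trans hy
  rw [← hcF, ← hcG]
  calc (F'.card : ℝ) * G'.card ≤ (y + y⁻¹) ^ (2 * n) * y ^ (-(2 * t : ℤ)) :=
        hF'.card_mul_card_le (Nat.succ_pos _) hFG' hy
    _ ≤ (y + y⁻¹) ^ (2 * n) * y ^ (-β * (2 * n)) := by
        gcongr
        rw [← Real.rpow_intCast]
        exact Real.rpow_le_rpow_of_exponent_le hy (by push_cast; linarith)
    _ = ((y + y⁻¹) * y ^ (-β)) ^ (2 * (n : ℝ)) := by
        rw [Real.mul_rpow (by positivity) (by positivity), ← Real.rpow_mul hy0]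
        norm_cast
    _ = _ := by rw [hyβ, ← Real.rpow_mul zero_le_two, mul_comm]
end

section
/- Let n ∈ ℕ, n ≥ 1. If F ⊆ S_n is a family of permutations such that any two permutations in F agree on at least one point (i.e., for all σ, π ∈ F there exists i with σ(i) = π(i)), then |F| ≤ (n-1)!. -/
theorem stmt_13 (n : ℕ) (hn : 1 ≤ n) (F : Finset (Equiv.Perm (Fin n)))
    (hF : ∀ σ ∈ F, ∀ π ∈ F, ∃ i : Fin n, σ i = π i) :
    F.card ≤ (n - 1).factorial := by
  obtain ⟨m, rfl⟩ : ∃ m, n = m + 1 := ⟨n - 1, by omega⟩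
  simp only [Nat.add_sub_cancel]
  -- normalize: σ ↦ (i ↦ σ i - σ 0), then decompose
  set g : Equiv.Perm (Fin (m + 1)) → Equiv.Perm (Fin m) :=
    fun σ => (Equiv.Perm.decomposeFin (σ.trans (Equiv.subRight (σ 0)))).2 with hg
  have hcard : F.card ≤ Fintype.card (Equiv.Perm (Fin m)) := by
    apply Finset.card_le_card_of_injOn g (fun _ _ => Finset.mem_univ _)
    intro σ hσ π hπ hgeq
    have h0 : ∀ τ : Equiv.Perm (Fin (m + 1)),
        (τ.trans (Equiv.subRight (τ 0))) 0 = 0 := by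
      intro τ; simp [Equiv.subRight]
    have key : σ.trans (Equiv.subRight (σ 0)) = π.trans (Equiv.subRight (π 0)) := by
      have h1 : Equiv.Perm.decomposeFin (σ.trans (Equiv.subRight (σ 0))) =
          Equiv.Perm.decomposeFin (π.trans (Equiv.subRight (π 0))) := by
        have hfst : ∀ τ : Equiv.Perm (Fin (m + 1)),
            (Equiv.Perm.decomposeFin (τ.trans (Equiv.subRight (τ 0)))).1 = 0 := by
          intro τ
          have := Equiv.Perm.decomposeFin_symm_apply_zero
            (Equiv.Perm.decomposeFin (τ.trans (Equiv.subRight (τ 0)))).1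
            (Equiv.Perm.decomposeFin (τ.trans (Equiv.subRight (τ 0)))).2
          rw [Prod.mk.eta, Equiv.symm_apply_apply] at this
          rw [h0] at this
          exact this.symm
        apply Prod.ext
        · rw [hfst, hfst]
        · exact hgeq
      exact Equiv.Perm.decomposeFin.injective h1
    have hpt : ∀ i, σ i - σ 0 = π i - π 0 := by
      intro i
      have := congrArg (fun e : Equiv.Perm (Fin (m+1)) => e i) key
      simpa [Equiv.subRight] using this
    obtain ⟨j, hj⟩ := hF σ hσ π hπ
    have h00 : σ 0 = π 0 := by
      have := hpt j
      rw [hj] at this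
      exact sub_right_inj.mp this
    ext i
    have := hpt i
    rw [h00] at this
    have h2 := congrArg (· + π 0) this
    have h3 : σ i = π i := by simpa using h2
    exact congrArg Fin.val h3
  calc F.card ≤ Fintype.card (Equiv.Perm (Fin m)) := hcard
    _ = m.factorial := by simp [Fintype.card_perm]
end

section
/- Let F ⊆ P([n]) be a 3-wise intersecting up-set and let I(F) = {S ∩ T : S, T ∈ F}. Then F and I(F) are cross-intersecting, and consequently μ_{3/4}(F) + μ_{1/4}(I(F)) ≤ 1, where μ_p is the p-biased measure on P([n]). -/
/-- The p-biased measure of a family of subsets of an n-element set. -/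
noncomputable def biasedMeasure (n : ℕ) (p : ℝ) (G : Finset (Finset (Fin n))) : ℝ :=
  ∑ S ∈ G, p ^ S.card * (1 - p) ^ (n - S.card)

/-- The family of pairwise intersections `{S ∩ T : S, T ∈ F}`. -/
def interFamily (n : ℕ) (F : Finset (Finset (Fin n))) : Finset (Finset (Fin n)) :=
  (F ×ˢ F).image (fun p => p.1 ∩ p.2)

lemma total_measure (n : ℕ) :
    ∑ S : Finset (Fin n), (3/4 : ℝ) ^ S.card * (1/4 : ℝ) ^ (n - S.card) = 1 := by
  have h := Finset.prod_add (fun _ : Fin n => (3/4 : ℝ)) (fun _ => (1/4 : ℝ)) Finset.univ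
  simp only [Finset.prod_const, Finset.powerset_univ] at h
  rw [show ((3:ℝ)/4 + 1/4) = 1 by norm_num, one_pow] at h
  refine Eq.trans ?_ h.symm
  apply Finset.sum_congr rfl
  intro S _
  rw [Finset.card_sdiff_of_subset (Finset.subset_univ S), Finset.card_univ, Fintype.card_fin]

theorem stmt_18 (n : ℕ) (F : Finset (Finset (Fin n)))
    (hup : ∀ A ∈ F, ∀ B : Finset (Fin n), A ⊆ B → B ∈ F)
    (h3 : ∀ A ∈ F, ∀ B ∈ F, ∀ C ∈ F, (A ∩ B ∩ C).Nonempty) :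
    (∀ A ∈ F, ∀ B ∈ interFamily n F, (A ∩ B).Nonempty) ∧
    biasedMeasure n (3 / 4) F + biasedMeasure n (1 / 4) (interFamily n F) ≤ 1 := by
  have hcross : ∀ A ∈ F, ∀ B ∈ interFamily n F, (A ∩ B).Nonempty := by
    intro A hA B hB
    simp only [interFamily, Finset.mem_image, Finset.mem_product] at hB
    obtain ⟨⟨S, T⟩, ⟨hS, hT⟩, rfl⟩ := hB
    rw [← Finset.inter_assoc]
    exact h3 A hA S hS T hT
  refine ⟨hcross, ?_⟩
  set I := interFamily n F with hI
  set G := I.image (fun B => Bᶜ) with hG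
  have hinj : Set.InjOn (fun B : Finset (Fin n) => Bᶜ) I := fun a _ b _ h => by
    simpa using congrArg compl h
  have hdisj : Disjoint F G := by
    rw [Finset.disjoint_right]
    intro A hAG hAF
    simp only [hG, Finset.mem_image] at hAG
    obtain ⟨B, hB, rfl⟩ := hAG
    obtain ⟨x, hx⟩ := hcross Bᶜ hAF B hB
    simp at hx
  have hGmeas : biasedMeasure n (1/4) I = biasedMeasure n (3/4) G := by
    unfold biasedMeasure
    rw [hG, Finset.sum_image (fun a ha b hb h => hinj ha hb h)]
    apply Finset.sum_congr rfl
    intro B _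
    have hc : Bᶜ.card = n - B.card := by
      rw [Finset.card_compl, Fintype.card_fin]
    have hle : B.card ≤ n := by
      simpa using Finset.card_le_card (Finset.subset_univ B)
    rw [hc, Nat.sub_sub_self hle]
    norm_num [mul_comm]
  have key : biasedMeasure n (3/4) F + biasedMeasure n (3/4) G ≤ 1 := by
    unfold biasedMeasure
    rw [← Finset.sum_union hdisj]
    calc ∑ x ∈ F ∪ G, (3/4:ℝ)^x.card*(1-3/4)^(n-x.card)
        ≤ ∑ S : Finset (Fin n), (3/4:ℝ)^S.card*(1-3/4)^(n-S.card) :=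
          Finset.sum_le_sum_of_subset_of_nonneg (Finset.subset_univ _)
            (by intro S _ _; positivity)
      _ = 1 := by rw [show (1:ℝ)-3/4 = 1/4 by norm_num]; exact total_measure n
  rw [hGmeas] at *
  linarith
end
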